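/- In the group G = ⟨X, Y | X = Y²XY², Y = X²YX²⟩, setting Z = (XY)⁻¹, the elements X², Y², Z² pairwise commute, and conjugation by each of X, Y, Z inverts the squares of the other two (e.g., X⁻¹Y²X = Y⁻², X⁻¹Z²X = Z⁻²). -/

import Mathlib

/-- Relators of the fundamental group of the Hantzsche–Wendt manifold (didicosm `c22`):
generators `X = of 0`, `Y = of 1`, relations `X = Y²XY²`, `Y = X²YX²`. -/
def c22Rels : Set (FreeGroup (Fin 2)) :=
  { (FreeGroup.of 0)⁻¹ * FreeGroup.of 1 ^ 2 * FreeGroup.of 0 * FreeGroup.of 1 ^ 2,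
    (FreeGroup.of 1)⁻¹ * FreeGroup.of 0 ^ 2 * FreeGroup.of 1 * FreeGroup.of 0 ^ 2 }

/-!
Say that `a` inverts `b` if `a⁻¹ b a = b⁻¹`; then `a²` commutes with `b`, and `a⁻¹` inverts
`b` as well. The relators say that `X` inverts `Y²` and `Y` inverts `X²`, so `Z⁻¹ = XY`
inverts both squares. That `X` inverts `Z²` amounts to `XYXY²XYX = 1`, which follows by
moving `Y²` past `X` and then `X²` past `Y`. Since `Y = (ZX)⁻¹`, the pair `(Z, X)` now
satisfies the same relations as `(X, Y)`, and the first step shows that `Y` inverts `Z²`.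
-/

section ConjInverts

variable {G : Type*} [Group G] {a b : G}

theorem commute_sq_of_inv_mul_mul_eq_inv (h : a⁻¹ * b * a = b⁻¹) : Commute (a ^ 2) b := by
  have h' : a⁻¹ * b⁻¹ * a = b :=
    calc a⁻¹ * b⁻¹ * a = (a⁻¹ * b * a)⁻¹ := by group
      _ = b := by rw [h, inv_inv]
  calc a ^ 2 * b = a ^ 2 * (a⁻¹ * (a⁻¹ * b * a) * a) := by rw [h, h']
    _ = b * a ^ 2 := by simp only [sq]; group

theorem mul_mul_inv_eq_inv_of_inv_mul_mul_eq_inv (h : a⁻¹ * b * a = b⁻¹) :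
    a * b * a⁻¹ = b⁻¹ := by
  calc a * b * a⁻¹ = a⁻¹ * (a ^ 2 * b) * a⁻¹ := by simp only [sq]; group
    _ = a⁻¹ * (b * a ^ 2) * a⁻¹ := by rw [(commute_sq_of_inv_mul_mul_eq_inv h).eq]
    _ = b⁻¹ := by rw [← h]; group

end ConjInverts

namespace HantzscheWendt

variable {G : Type*} [Group G] {x y : G}

theorem mul_inv_conj_sq_left (hy : y⁻¹ * x ^ 2 * y = (x ^ 2)⁻¹) :
    ((x * y)⁻¹)⁻¹ * x ^ 2 * (x * y)⁻¹ = (x ^ 2)⁻¹ := by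
  calc ((x * y)⁻¹)⁻¹ * x ^ 2 * (x * y)⁻¹
        = x * (y * x ^ 2 * y⁻¹) * x⁻¹ := by simp only [sq]; group
    _ = (x ^ 2)⁻¹ := by rw [mul_mul_inv_eq_inv_of_inv_mul_mul_eq_inv hy]; group

theorem mul_inv_conj_sq_right (hx : x⁻¹ * y ^ 2 * x = (y ^ 2)⁻¹) :
    ((x * y)⁻¹)⁻¹ * y ^ 2 * (x * y)⁻¹ = (y ^ 2)⁻¹ := by
  calc ((x * y)⁻¹)⁻¹ * y ^ 2 * (x * y)⁻¹ = x * y ^ 2 * x⁻¹ := by simp only [sq]; group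
    _ = (y ^ 2)⁻¹ := mul_mul_inv_eq_inv_of_inv_mul_mul_eq_inv hx

theorem left_conj_mul_inv_sq (hx : x⁻¹ * y ^ 2 * x = (y ^ 2)⁻¹)
    (hy : y⁻¹ * x ^ 2 * y = (x ^ 2)⁻¹) :
    x⁻¹ * (x * y)⁻¹ ^ 2 * x = ((x * y)⁻¹ ^ 2)⁻¹ := by
  have key : x * y * x * y ^ 2 * x * y * x = 1 :=
    calc x * y * x * y ^ 2 * x * y * x
          = x * y * x * x * (x⁻¹ * y ^ 2 * x) * y * x := by simp only [sq]; group
      _ = x * (y * x ^ 2 * y⁻¹) * x := by rw [hx]; simp only [sq]; group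
      _ = 1 := by rw [mul_mul_inv_eq_inv_of_inv_mul_mul_eq_inv hy]; group
  rw [← mul_eq_one_iff_eq_inv]
  calc x⁻¹ * (x * y)⁻¹ ^ 2 * x * (x * y)⁻¹ ^ 2
        = (x * y * x * y ^ 2 * x * y * x)⁻¹ := by simp only [sq]; group
    _ = 1 := by rw [key, inv_one]

theorem right_conj_mul_inv_sq (hx : x⁻¹ * y ^ 2 * x = (y ^ 2)⁻¹)
    (hy : y⁻¹ * x ^ 2 * y = (x ^ 2)⁻¹) :
    y⁻¹ * (x * y)⁻¹ ^ 2 * y = ((x * y)⁻¹ ^ 2)⁻¹ := by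
  have hzx : ((x * y)⁻¹ * x)⁻¹ = y := by group
  have := mul_inv_conj_sq_left (x := (x * y)⁻¹) (y := x) (left_conj_mul_inv_sq hx hy)
  rwa [hzx] at this

end HantzscheWendt

theorem c22_translation_relations :
    let X : PresentedGroup c22Rels := PresentedGroup.of 0
    let Y : PresentedGroup c22Rels := PresentedGroup.of 1
    let Z : PresentedGroup c22Rels := (X * Y)⁻¹
    Commute (X ^ 2) (Y ^ 2) ∧ Commute (X ^ 2) (Z ^ 2) ∧ Commute (Y ^ 2) (Z ^ 2) ∧
    X⁻¹ * Y ^ 2 * X = (Y ^ 2)⁻¹ ∧ X⁻¹ * Z ^ 2 * X = (Z ^ 2)⁻¹ ∧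
    Y⁻¹ * X ^ 2 * Y = (X ^ 2)⁻¹ ∧ Y⁻¹ * Z ^ 2 * Y = (Z ^ 2)⁻¹ ∧
    Z⁻¹ * X ^ 2 * Z = (X ^ 2)⁻¹ ∧ Z⁻¹ * Y ^ 2 * Z = (Y ^ 2)⁻¹ := by
  intro X Y Z
  have hX : X⁻¹ * Y ^ 2 * X = (Y ^ 2)⁻¹ := by
    rw [← mul_eq_one_iff_eq_inv]
    exact PresentedGroup.one_of_mem (by simp [c22Rels])
  have hY : Y⁻¹ * X ^ 2 * Y = (X ^ 2)⁻¹ := by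
    rw [← mul_eq_one_iff_eq_inv]
    exact PresentedGroup.one_of_mem (by simp [c22Rels])
  have hXZ := HantzscheWendt.left_conj_mul_inv_sq hX hY
  have hYZ := HantzscheWendt.right_conj_mul_inv_sq hX hY
  exact ⟨(commute_sq_of_inv_mul_mul_eq_inv hY).symm, commute_sq_of_inv_mul_mul_eq_inv hXZ,
    commute_sq_of_inv_mul_mul_eq_inv hYZ, hX, hXZ, hY, hYZ,
    HantzscheWendt.mul_inv_conj_sq_left hY, HantzscheWendt.mul_inv_conj_sq_right hX⟩
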